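/- arXiv:2502.08530 — 2 statements merged into one kernel-verified Lean document; each statement's English description precedes it below -/
import Mathlib

section
/- Let (C, v) ⊆ (L, v) be an extension of valued fields. Let (l_1, …, l_n) be a tuple of elements of L that is separated over C, let U = span_C(l_1, …, l_n) be its C-linear span, and let t ∈ L ∖ U. Suppose w ∈ U satisfies v(t − w) ≥ v(t − u) for every u ∈ U. Then the tuple (l_1, …, l_n, t − w) is separated over C (and in particular C-linearly independent if (l_1, …, l_n) is). -/
/-!
Put `x = t - w`. Since `w` is a best approximation of `t` from `U`, so is `0` of `x`: for `s ∈ U`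
and `0 ≠ d ∈ C` we get `v (d * x) ≤ v (d * (x + d⁻¹ * s)) = v (s + d * x)`. Together with
`v s ≤ max (v (s + d * x)) (v (d * x))` this forces the ultrametric inequality
`v (s + d * x) ≤ max (v s) (v (d * x))` to be an equality, which is separatedness of the
extended tuple once `s` runs over the `C`-combinations of the separated tuple `l`.
A separated tuple without zero entries is linearly independent, and `x ≠ 0` as `t ∉ U`.
-/

variable {L Γ : Type*} [Field L] [LinearOrderedCommGroupWithZero Γ]

instance : OrderBot Γ where
  bot := 0
  bot_le := fun _ => zero_le'

/-- The tuple `b` is separated over the subfield `C`. -/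
def Valuation.IsSeparatedTuple (v : Valuation L Γ) (C : Subfield L) {n : ℕ} (b : Fin n → L) :
    Prop :=
  ∀ c : Fin n → C, v (∑ i, (c i : L) * b i) = Finset.univ.sup fun i => v (c i : L) * v (b i)

namespace Valuation

variable (v : Valuation L Γ) {C : Subfield L}

theorem map_mul_le_map_add_mul_of_le_map_sub {U : Submodule C L} {x : L}
    (hx : ∀ u ∈ U, v x ≤ v (x - u)) {s : L} (hs : s ∈ U) (d : C) :
    v (d * x) ≤ v (s + d * x) := by
  rcases eq_or_ne d 0 with rfl | hd
  · simp
  have hdL : (d : L) ≠ 0 := by exact_mod_cast hd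
  have hmem : -(d⁻¹ • s) ∈ U := U.neg_mem (U.smul_mem _ hs)
  have hrw : s + d * x = d * (x - -(d⁻¹ • s)) := by
    rw [Subfield.smul_def, Subfield.coe_inv, smul_eq_mul, sub_neg_eq_add, mul_add,
      mul_inv_cancel_left₀ hdL, add_comm]
  rw [hrw, map_mul, map_mul]
  exact mul_le_mul_right (hx _ hmem) _

theorem map_add_mul_eq_sup_of_le_map_sub {U : Submodule C L} {x : L}
    (hx : ∀ u ∈ U, v x ≤ v (x - u)) {s : L} (hs : s ∈ U) (d : C) :
    v (s + d * x) = v s ⊔ v (d * x) := by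
  have hle := v.map_mul_le_map_add_mul_of_le_map_sub hx hs d
  refine le_antisymm (v.map_add _ _) (sup_le ?_ hle)
  calc v s = v (s + d * x - d * x) := by rw [add_sub_cancel_right]
    _ ≤ v (s + d * x) := v.map_sub_le le_rfl hle

variable {n : ℕ} {l : Fin n → L}

theorem IsSeparatedTuple.snoc (hl : v.IsSeparatedTuple C l) {x : L}
    (hx : ∀ u ∈ Submodule.span C (Set.range l), v x ≤ v (x - u)) :
    v.IsSeparatedTuple C (Fin.snoc l x) := by
  intro c
  have hs : ∑ i : Fin n, (c i.castSucc : L) * l i ∈ Submodule.span C (Set.range l) :=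
    Submodule.sum_mem _ fun i _ =>
      Submodule.smul_mem _ (c i.castSucc) (Submodule.subset_span (Set.mem_range_self i))
  rw [Fin.sum_univ_castSucc, Fin.univ_castSuccEmb, Finset.sup_cons, Finset.sup_map]
  simp only [Function.comp_def, Fin.coe_castSuccEmb, Fin.snoc_castSucc, Fin.snoc_last]
  rw [v.map_add_mul_eq_sup_of_le_map_sub hx hs, hl, map_mul, sup_comm]

theorem IsSeparatedTuple.linearIndependent (hl : v.IsSeparatedTuple C l) (hl0 : ∀ i, l i ≠ 0) :
    LinearIndependent C l := by
  rw [Fintype.linearIndependent_iff]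
  intro c hc i
  have hsum : ∑ i, (c i : L) * l i = 0 := by simpa [Subfield.smul_def] using hc
  have hsup : (Finset.univ.sup fun i => v (c i : L) * v (l i)) = ⊥ := by
    rw [← hl c, hsum, map_zero]
    rfl
  have hi := (Finset.sup_eq_bot_iff _ _).mp hsup i (Finset.mem_univ i)
  rcases mul_eq_zero.mp hi with h | h
  · exact_mod_cast v.zero_iff.mp h
  · exact absurd h (v.ne_zero_iff.mpr (hl0 i))

end Valuation

/- `v` is written multiplicatively, so the paper's `v(t - w) ≥ v(t - u)` reads
`v (t - w) ≤ v (t - u)`. -/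
theorem snoc_best_approximation_is_separated
    (v : Valuation L Γ) (C : Subfield L) {n : ℕ} (l : Fin n → L)
    (hsep : v.IsSeparatedTuple C l)
    (t : L) (ht : t ∉ Submodule.span C (Set.range l))
    (w : L) (hw : w ∈ Submodule.span C (Set.range l))
    (hbest : ∀ u ∈ Submodule.span C (Set.range l), v (t - w) ≤ v (t - u)) :
    v.IsSeparatedTuple C (Fin.snoc l (t - w)) ∧
      (LinearIndependent C l → LinearIndependent C (Fin.snoc l (t - w) : Fin (n + 1) → L)) := by
  have hbest_zero : ∀ u ∈ Submodule.span C (Set.range l), v (t - w) ≤ v (t - w - u) :=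
    fun u hu => by simpa only [sub_sub] using hbest (w + u) (Submodule.add_mem _ hw hu)
  have hsnoc := hsep.snoc v hbest_zero
  refine ⟨hsnoc, fun hli => hsnoc.linearIndependent v fun i => ?_⟩
  refine Fin.lastCases ?_ (fun j => ?_) i
  · have hx0 : t - w ≠ 0 := sub_ne_zero.mpr fun h => ht (h ▸ hw)
    simpa using hx0
  · simpa using hli.ne_zero j
end

section
/- Let (C, v) ⊆ (L, v) be an extension of valued fields. Let (b_1, …, b_n) be a good separated basis over C of its C-linear span U ⊆ L, and let b ∈ L ∖ U be such that the tuple (b_1, …, b_n, b) is separated over C. Then there exists c ∈ C^× such that (b_1, …, b_n, c·b) is a good separated basis over C of the (n+1)-dimensional subspace U + C·b. -/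
/-!
STATEMENT 9: Let (b_1,…,b_n) be a good separated basis over C of its C-linear
span U ⊆ L, and let b ∈ L \ U be such that (b_1,…,b_n,b) is separated over C.
Then there exists c ∈ C^× such that (b_1,…,b_n,c·b) is a good separated basis
over C of the subspace U + C·b.

With the multiplicative valuation, "good" means: for all i, j, either
v(bᵢ) = v(bⱼ) or v(bᵢ)/v(bⱼ) is not in the value group of C, i.e.
¬∃ c ∈ C, c ≠ 0 ∧ v bᵢ = v c * v bⱼ.
-/

variable {L Γ : Type*} [Field L] [LinearOrderedCommGroupWithZero Γ]

/-- The tuple `b` is good over `C`. -/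
def Valuation.IsGoodTuple (v : Valuation L Γ) (C : Subfield L) {n : ℕ} (b : Fin n → L) : Prop :=
  ∀ i j, v (b i) = v (b j) ∨ ¬ ∃ c : C, (c : L) ≠ 0 ∧ v (b i) = v (c : L) * v (b j)

/-!
Separatedness of `(b₁, …, bₙ, c·t)` is inherited from that of `(b₁, …, bₙ, t)`, since rescaling the
entries of a tuple by elements of `C` does not affect separatedness. Goodness only concerns the
cosets of `v(C^×)` containing the values: if `v t` shares its coset with some `v bᵢ`, rescale `t` so
that `v (c·t) = v bᵢ` and the goodness of `b` transfers; otherwise `c = 1` already works.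
-/

namespace Valuation

variable (v : Valuation L Γ) (C : Subfield L)

def SameValueCoset (x y : L) : Prop :=
  ∃ c : C, (c : L) ≠ 0 ∧ v x = v (c : L) * v y

variable {v C}

theorem SameValueCoset.symm {x y : L} (h : v.SameValueCoset C x y) : v.SameValueCoset C y x := by
  obtain ⟨c, hc, hxy⟩ := h
  have hvc : v (c : L) ≠ 0 := v.ne_zero_iff.mpr hc
  refine ⟨c⁻¹, by simpa using hc, ?_⟩
  rw [Subfield.coe_inv, map_inv₀, hxy, ← mul_assoc, inv_mul_cancel₀ hvc, one_mul]

theorem sameValueCoset_congr_right {x y y' : L} (h : v y = v y') :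
    v.SameValueCoset C x y ↔ v.SameValueCoset C x y' := by
  simp only [SameValueCoset, h]

theorem IsGoodTuple.snoc {n : ℕ} {b : Fin n → L} {x : L} (hb : v.IsGoodTuple C b)
    (hx : ∀ j, v (b j) = v x ∨ ¬ v.SameValueCoset C (b j) x) :
    v.IsGoodTuple C (Fin.snoc b x) := by
  intro j k
  induction j using Fin.lastCases with
  | last =>
    induction k using Fin.lastCases with
    | last => exact Or.inl rfl
    | cast k =>
      simp only [Fin.snoc_last, Fin.snoc_castSucc]
      exact (hx k).imp Eq.symm fun hk hxk => hk (show v.SameValueCoset C x (b k) from hxk).symm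
  | cast j =>
    induction k using Fin.lastCases with
    | last =>
      simp only [Fin.snoc_last, Fin.snoc_castSucc]
      exact hx j
    | cast k => simpa only [Fin.snoc_castSucc] using hb j k

theorem exists_isGoodTuple_snoc_mul {n : ℕ} {b : Fin n → L} (hb : v.IsGoodTuple C b) (t : L) :
    ∃ c : C, (c : L) ≠ 0 ∧ v.IsGoodTuple C (Fin.snoc b ((c : L) * t)) := by
  by_cases hcoset : ∃ i, v.SameValueCoset C t (b i)
  · obtain ⟨i, d, hd, hti⟩ := hcoset
    have hvd : v (d : L) ≠ 0 := v.ne_zero_iff.mpr hd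
    have hval : v ((d⁻¹ : C) * t) = v (b i) := by
      rw [map_mul, Subfield.coe_inv, map_inv₀, hti, ← mul_assoc, inv_mul_cancel₀ hvd, one_mul]
    refine ⟨d⁻¹, by simpa using hd, hb.snoc fun j => ?_⟩
    rw [hval, sameValueCoset_congr_right hval]
    exact hb j i
  · simp only [not_exists] at hcoset
    refine ⟨1, one_ne_zero, hb.snoc fun j => Or.inr fun hj => hcoset j ?_⟩
    rw [OneMemClass.coe_one, one_mul] at hj
    exact hj.symm

theorem IsSeparatedTuple.mul {n : ℕ} {b : Fin n → L} (hb : v.IsSeparatedTuple C b)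
    (c : Fin n → C) : v.IsSeparatedTuple C fun i => (c i : L) * b i := by
  intro d
  have h := hb fun i => d i * c i
  simp only [Subfield.coe_mul, map_mul, mul_assoc] at h ⊢
  exact h

theorem IsSeparatedTuple.snoc_mul {n : ℕ} {b : Fin n → L} {t : L}
    (h : v.IsSeparatedTuple C (Fin.snoc b t)) (c : C) :
    v.IsSeparatedTuple C (Fin.snoc b ((c : L) * t)) := by
  have hscale : (Fin.snoc b ((c : L) * t) : Fin (n + 1) → L) =
      fun i => ((Fin.snoc (fun _ => 1) c : Fin (n + 1) → C) i : L) *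
        (Fin.snoc b t : Fin (n + 1) → L) i := by
    ext i
    induction i using Fin.lastCases <;> simp
  rw [hscale]
  exact h.mul _

end Valuation

theorem Submodule.span_range_snoc_smul {R M : Type*} [Semiring R] [AddCommMonoid M] [Module R M]
    {n : ℕ} (b : Fin n → M) {r : R} (hr : IsUnit r) (x : M) :
    span R (Set.range (Fin.snoc b (r • x))) = span R (Set.range b) ⊔ span R {x} := by
  rw [Fin.range_snoc, span_insert, span_singleton_smul_eq hr, sup_comm]

theorem good_separated_basis_extension_general
    (v : Valuation L Γ) (C : Subfield L) {n : ℕ} (b : Fin n → L)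
    (hInd : LinearIndependent C b)
    (hGood : v.IsGoodTuple C b)
    (t : L) (ht : t ∉ Submodule.span C (Set.range b))
    (hSnoc : v.IsSeparatedTuple C (Fin.snoc b t)) :
    ∃ c : C, (c : L) ≠ 0 ∧
      LinearIndependent C (Fin.snoc b ((c : L) * t) : Fin (n + 1) → L) ∧
      v.IsSeparatedTuple C (Fin.snoc b ((c : L) * t)) ∧
      v.IsGoodTuple C (Fin.snoc b ((c : L) * t)) ∧
      Submodule.span C (Set.range (Fin.snoc b ((c : L) * t) : Fin (n + 1) → L)) =
        Submodule.span C (Set.range b) ⊔ Submodule.span C {t} := by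
  obtain ⟨c, hc, hGood'⟩ := v.exists_isGoodTuple_snoc_mul hGood t
  have hc' : c ≠ 0 := by simpa using hc
  have hct : c • t ∉ Submodule.span C (Set.range b) := by
    rwa [Submodule.smul_mem_iff _ hc']
  exact ⟨c, hc, linearIndependent_finSnoc.mpr ⟨hInd, hct⟩, hSnoc.snoc_mul c, hGood',
    Submodule.span_range_snoc_smul b hc'.isUnit t⟩

theorem good_separated_basis_extension
    (v : Valuation L Γ) (C : Subfield L) {n : ℕ} (b : Fin n → L)
    (hInd : LinearIndependent C b)
    (hSep : v.IsSeparatedTuple C b)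
    (hGood : v.IsGoodTuple C b)
    (t : L) (ht : t ∉ Submodule.span C (Set.range b))
    (hSnoc : v.IsSeparatedTuple C (Fin.snoc b t)) :
    ∃ c : C, (c : L) ≠ 0 ∧
      LinearIndependent C (Fin.snoc b ((c : L) * t) : Fin (n + 1) → L) ∧
      v.IsSeparatedTuple C (Fin.snoc b ((c : L) * t)) ∧
      v.IsGoodTuple C (Fin.snoc b ((c : L) * t)) ∧
      Submodule.span C (Set.range (Fin.snoc b ((c : L) * t) : Fin (n + 1) → L)) =
        Submodule.span C (Set.range b) ⊔ Submodule.span C {t} :=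
  good_separated_basis_extension_general v C b hInd hGood t ht hSnoc
end
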